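/- Let d ≥ 1 be an integer. Two points z, z′ of the Brieskorn link Σ_0(d) lie in the same orbit of the S¹ × O(3)-action (w,A)·z = a(w, b(A, z)) if and only if |z₀| = |z′₀|. That is, the orbits of this action on Σ_0(d) are exactly the level sets of the function z ↦ |z₀|. -/

import Mathlib

open Matrix

noncomputable section

open Finset in
open scoped RealInnerProductSpace in
lemma gram_lemma (x y x' y' : EuclideanSpace ℝ (Fin 3))
    (h1 : ⟪x, x⟫ = ⟪x', x'⟫) (h2 : ⟪x, y⟫ = ⟪x', y'⟫)
    (h3 : ⟪y, y⟫ = ⟪y', y'⟫) :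
    ∃ A : Matrix (Fin 3) (Fin 3) ℝ, Aᵀ * A = 1 ∧ A.mulVec x = x' ∧ A.mulVec y = y' := by
  classical
  let f : (EuclideanSpace ℝ (Fin 2)) →ₗ[ℝ] EuclideanSpace ℝ (Fin 3) :=
    { toFun := fun c => c 0 • x + c 1 • y
      map_add' := by intro a b; show (a + b) 0 • x + (a + b) 1 • y = _; simp [add_smul]; abel
      map_smul' := by intro m a; show (m • a) 0 • x + (m • a) 1 • y = _; simp [smul_smul, smul_add] }
  let g : (EuclideanSpace ℝ (Fin 2)) →ₗ[ℝ] EuclideanSpace ℝ (Fin 3) :=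
    { toFun := fun c => c 0 • x' + c 1 • y'
      map_add' := by intro a b; show (a + b) 0 • x' + (a + b) 1 • y' = _; simp [add_smul]; abel
      map_smul' := by intro m a; show (m • a) 0 • x' + (m • a) 1 • y' = _; simp [smul_smul, smul_add] }
  have hnorm : ∀ c, ‖f c‖ = ‖g c‖ := by
    intro c
    have hf : ⟪f c, f c⟫ = ⟪g c, g c⟫ := by
      show ⟪c 0 • x + c 1 • y, c 0 • x + c 1 • y⟫ = ⟪c 0 • x' + c 1 • y', c 0 • x' + c 1 • y'⟫
      simp only [inner_add_add_self, real_inner_smul_left, real_inner_smul_right]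
      have hyx := h2
      rw [← real_inner_comm x y, ← real_inner_comm x' y'] at hyx
      linear_combination (c 0)^2 * h1 + (c 1 * c 0) * h2 + (c 0 * c 1) * hyx + (c 1)^2 * h3
    have := congrArg Real.sqrt hf
    rwa [real_inner_self_eq_norm_sq, real_inner_self_eq_norm_sq,
      Real.sqrt_sq (norm_nonneg _), Real.sqrt_sq (norm_nonneg _)] at this
  have hker : LinearMap.ker f ≤ LinearMap.ker g := by
    intro c hc
    have : ‖g c‖ = 0 := by rw [← hnorm]; simp [LinearMap.mem_ker.mp hc]
    simpa [LinearMap.mem_ker] using norm_eq_zero.mp this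
  let L0 : LinearMap.range f →ₗ[ℝ] EuclideanSpace ℝ (Fin 3) :=
    (LinearMap.ker f).liftQ g hker ∘ₗ (f.quotKerEquivRange.symm : LinearMap.range f →ₗ[ℝ] _)
  have hL0 : ∀ c : EuclideanSpace ℝ (Fin 2), ∀ hmem, L0 ⟨f c, hmem⟩ = g c := by
    intro c hmem
    have : f.quotKerEquivRange (Submodule.Quotient.mk c) = ⟨f c, hmem⟩ := by
      apply Subtype.ext
      simp [LinearMap.quotKerEquivRange_apply_mk]
    simp [L0, ← this]
  have hLiso : ∀ s : LinearMap.range f, ‖L0 s‖ = ‖s‖ := by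
    rintro ⟨s, c, rfl⟩
    rw [hL0 c (LinearMap.mem_range_self f c), ← hnorm]
    rfl
  let L : LinearMap.range f →ₗᵢ[ℝ] EuclideanSpace ℝ (Fin 3) := ⟨L0, hLiso⟩
  let Lx := L.extend
  have hLx : ∀ c : EuclideanSpace ℝ (Fin 2), Lx (f c) = g c := by
    intro c
    exact (L.extend_apply ⟨f c, LinearMap.mem_range_self f c⟩).trans
      (hL0 c (LinearMap.mem_range_self f c))
  let e : Fin 3 → EuclideanSpace ℝ (Fin 3) := fun j => EuclideanSpace.single j 1
  let A : Matrix (Fin 3) (Fin 3) ℝ := fun i j => Lx (e j) i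
  have key : ∀ v : EuclideanSpace ℝ (Fin 3), A.mulVec v = (Lx v : Fin 3 → ℝ) := by
    intro v
    have hdecomp : v = ∑ j, v j • e j := by
      refine PiLp.ext fun i => ?_
      simp [e, Fin.sum_univ_three, PiLp.add_apply, PiLp.smul_apply, EuclideanSpace.single_apply]
      fin_cases i <;> simp
    funext i
    show ∑ j, A i j * v j = Lx v i
    conv_rhs => rw [hdecomp]
    rw [map_sum]
    simp only [_root_.map_smul]
    rw [WithLp.ofLp_sum, Finset.sum_apply]
    simp [A, PiLp.smul_apply, smul_eq_mul, mul_comm]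
  have hx : x = f (EuclideanSpace.single 0 1) := by
    show x = _
    simp [f, EuclideanSpace.single_apply]
  have hy : y = f (EuclideanSpace.single 1 1) := by
    show y = _
    simp [f, EuclideanSpace.single_apply]
  refine ⟨A, ?_, ?_, ?_⟩
  · ext j k
    have h := Lx.inner_map_map (e k) (e j)
    rw [PiLp.inner_apply, PiLp.inner_apply] at h
    simp only [RCLike.inner_apply, starRingEnd_apply, star_trivial] at h
    show ∑ i, A i j * A i k = (1 : Matrix (Fin 3) (Fin 3) ℝ) j k
    rw [Matrix.one_apply]
    simp only [A]
    rw [h]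
    simp [e, EuclideanSpace.single_apply]
    by_cases hc : j = k <;> simp [hc, eq_comm]
  · rw [key x, hx, hLx]
    simp [g, EuclideanSpace.single_apply]
  · rw [key y, hy, hLx]
    simp [g, EuclideanSpace.single_apply]

lemma abs_sq_sum (z : EuclideanSpace ℂ (Fin 4)) (h : ‖z‖ = 1) :
    ‖z 0‖^2 + ‖z 1‖^2 + ‖z 2‖^2 +
      ‖z 3‖^2 = 1 := by
  have h0 := EuclideanSpace.norm_eq z
  rw [h] at h0
  have h2 := Real.sqrt_eq_one.mp h0.symm
  rw [Fin.sum_univ_four] at h2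
  simpa using h2


/-- The Brieskorn polynomial `f(z) = z₀^d + z₁² + z₂² + z₃²` on `ℂ⁴`. -/
def brieskorn (d : ℕ) (z : EuclideanSpace ℂ (Fin 4)) : ℂ :=
  z 0 ^ d + z 1 ^ 2 + z 2 ^ 2 + z 3 ^ 2

/-- The circle-type action `a(w,z) = (w²z₀, w^d z₁, w^d z₂, w^d z₃)`. -/
def aAct (d : ℕ) (w : ℂ) (z : EuclideanSpace ℂ (Fin 4)) : EuclideanSpace ℂ (Fin 4) :=
  WithLp.toLp 2 (fun i => if i = 0 then w ^ 2 * z i else w ^ d * z i)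

/-- The `O(3)`-action `b(A,z) = (z₀, A(z₁,z₂,z₃))` on `ℂ⁴`. -/
def bAct (A : Matrix (Fin 3) (Fin 3) ℝ) (z : EuclideanSpace ℂ (Fin 4)) :
    EuclideanSpace ℂ (Fin 4) :=
  WithLp.toLp 2 (fun i : Fin 4 => if h : i = 0 then z 0
    else (A.map Complex.ofReal).mulVec (fun j => z j.succ) (i.pred h))

/-- Two points of the Brieskorn link `Σ_0(d)` lie in the same orbit of the
`S¹ × O(3)`-action `(w,A)·z = a(w, b(A,z))` if and only if `|z₀| = |z′₀|`:
the orbits are exactly the level sets of `z ↦ |z₀|`. -/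
theorem orbits_are_level_sets (d : ℕ) (hd : 1 ≤ d)
    (z z' : EuclideanSpace ℂ (Fin 4))
    (hz : brieskorn d z = 0 ∧ ‖z‖ = 1) (hz' : brieskorn d z' = 0 ∧ ‖z'‖ = 1) :
    (∃ (w : ℂ) (A : Matrix (Fin 3) (Fin 3) ℝ),
      ‖w‖ = 1 ∧ Aᵀ * A = 1 ∧ aAct d w (bAct A z) = z') ↔
    ‖z 0‖ = ‖z' 0‖ := by
  constructor
  · rintro ⟨w, A, hw, hA, hact⟩
    rw [← hact]
    show _ = ‖aAct d w (bAct A z) 0‖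
    simp [aAct, bAct, norm_mul, norm_pow, hw]
  · intro habs
    -- find the circle element
    obtain ⟨w, hw, hw2⟩ : ∃ w : ℂ, ‖w‖ = 1 ∧ w ^ 2 * z 0 = z' 0 := by
      by_cases h0 : z 0 = 0
      · refine ⟨1, by simp, ?_⟩
        have : ‖z' 0‖ = 0 := by rw [← habs, h0]; simp
        rw [h0, norm_eq_zero.mp this]
        ring
      · set c : ℂ := z' 0 / z 0 with hc
        have hcabs : ‖c‖ = 1 := by
          rw [hc, norm_div, ← habs, div_self]
          simpa using h0
        refine ⟨Complex.exp ((c.arg / 2 : ℝ) * Complex.I), by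
          simpa using Complex.norm_exp_ofReal_mul_I (c.arg / 2), ?_⟩
        have hsq : Complex.exp ((c.arg / 2 : ℝ) * Complex.I) ^ 2
            = Complex.exp ((c.arg : ℝ) * Complex.I) := by
          rw [← Complex.exp_nat_mul]
          congr 1
          push_cast
          ring
        rw [hsq]
        have := Complex.norm_mul_exp_arg_mul_I c
        rw [hcabs] at this
        simp only [Complex.ofReal_one, one_mul] at this
        rw [this, hc, div_mul_cancel₀ _ h0]
    -- the tail vector, rotated
    set u : Fin 3 → ℂ := fun j => w ^ d * z j.succ with hu
    have e1 : z 1 ^ 2 + z 2 ^ 2 + z 3 ^ 2 = -(z 0 ^ d) := by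
      have := hz.1; unfold brieskorn at this; linear_combination this
    have e2 : z' 1 ^ 2 + z' 2 ^ 2 + z' 3 ^ 2 = -(z' 0 ^ d) := by
      have := hz'.1; unfold brieskorn at this; linear_combination this
    have hpow : (w ^ d) ^ 2 * z 0 ^ d = z' 0 ^ d := by
      calc (w ^ d) ^ 2 * z 0 ^ d = (w ^ 2 * z 0) ^ d := by
            rw [mul_pow, ← pow_mul, ← pow_mul, Nat.mul_comm]
        _ = z' 0 ^ d := by rw [hw2]
    have hsq : u 0 ^ 2 + u 1 ^ 2 + u 2 ^ 2 = z' 1 ^ 2 + z' 2 ^ 2 + z' 3 ^ 2 := by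
      show (w ^ d * z 1) ^ 2 + (w ^ d * z 2) ^ 2 + (w ^ d * z 3) ^ 2 = _
      linear_combination (w ^ d) ^ 2 * e1 - e2 - hpow
    -- norms of the tails agree
    have habsu : ∀ j : Fin 3, ‖u j‖ = ‖z j.succ‖ := by
      intro j
      rw [hu]
      simp [norm_mul, norm_pow, hw]
    have hsum := abs_sq_sum z hz.2
    have hsum' := abs_sq_sum z' hz'.2
    have hab : ‖u 0‖ ^ 2 + ‖u 1‖ ^ 2 + ‖u 2‖ ^ 2
        = ‖z' 1‖ ^ 2 + ‖z' 2‖ ^ 2 + ‖z' 3‖ ^ 2 := by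
      rw [habsu 0, habsu 1, habsu 2]
      show ‖z 1‖ ^ 2 + ‖z 2‖ ^ 2 + ‖z 3‖ ^ 2 = _
      have h00 : ‖z 0‖ ^ 2 = ‖z' 0‖ ^ 2 := by rw [habs]
      linarith
    -- pass to real and imaginary parts
    have hbody : ∀ c : ℂ, ‖c‖ ^ 2 = c.re ^ 2 + c.im ^ 2 := by
      intro c; rw [Complex.sq_norm, Complex.normSq_apply]; ring
    simp only [hbody] at hab
    have hre := congrArg Complex.re hsq
    have him := congrArg Complex.im hsq
    simp only [pow_two, Complex.add_re, Complex.mul_re, Complex.add_im, Complex.mul_im]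
      at hre him
    -- apply the Gram lemma
    obtain ⟨A, hA, hAx, hAy⟩ := gram_lemma
      (WithLp.toLp 2 fun k => (u k).re) (WithLp.toLp 2 fun k => (u k).im)
      (WithLp.toLp 2 fun k : Fin 3 => (z' k.succ).re) (WithLp.toLp 2 fun k : Fin 3 => (z' k.succ).im)
      (by
        simp only [PiLp.inner_apply, RCLike.inner_apply, starRingEnd_apply, star_trivial,
          Fin.sum_univ_three]
        show (u 0).re * (u 0).re + (u 1).re * (u 1).re + (u 2).re * (u 2).re
          = (z' 1).re * (z' 1).re + (z' 2).re * (z' 2).re + (z' 3).re * (z' 3).re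
        linear_combination (hre + hab) / 2)
      (by
        simp only [PiLp.inner_apply, RCLike.inner_apply, starRingEnd_apply, star_trivial,
          Fin.sum_univ_three]
        show (u 0).im * (u 0).re + (u 1).im * (u 1).re + (u 2).im * (u 2).re
          = (z' 1).im * (z' 1).re + (z' 2).im * (z' 2).re + (z' 3).im * (z' 3).re
        linear_combination him / 2)
      (by
        simp only [PiLp.inner_apply, RCLike.inner_apply, starRingEnd_apply, star_trivial,
          Fin.sum_univ_three]
        show (u 0).im * (u 0).im + (u 1).im * (u 1).im + (u 2).im * (u 2).im
          = (z' 1).im * (z' 1).im + (z' 2).im * (z' 2).im + (z' 3).im * (z' 3).im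
        linear_combination (hab - hre) / 2)
    refine ⟨w, A, hw, hA, ?_⟩
    -- complex matrix action on the rotated tail
    have hAc : ∀ jj : Fin 3, (A.map Complex.ofReal).mulVec u jj = z' jj.succ := by
      intro jj
      have hx := congrFun hAx jj
      have hy := congrFun hAy jj
      simp only [Matrix.mulVec, dotProduct, Fin.sum_univ_three] at hx hy
      apply Complex.ext
      · show ((A.map Complex.ofReal).mulVec u jj).re = _
        simp only [Matrix.mulVec, dotProduct, Fin.sum_univ_three, Matrix.map_apply,
          Complex.add_re, Complex.mul_re, Complex.ofReal_re, Complex.ofReal_im]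
        simp only [zero_mul, sub_zero]
        exact hx
      · show ((A.map Complex.ofReal).mulVec u jj).im = _
        simp only [Matrix.mulVec, dotProduct, Fin.sum_univ_three, Matrix.map_apply,
          Complex.add_im, Complex.mul_im, Complex.ofReal_re, Complex.ofReal_im]
        simp only [zero_mul, add_zero]
        exact hy
    have husmul : (A.map Complex.ofReal).mulVec u
        = w ^ d • (A.map Complex.ofReal).mulVec (fun j => z j.succ) := by
      have h' : u = w ^ d • (fun j : Fin 3 => z j.succ) := rfl
      rw [h', Matrix.mulVec_smul]
    ext i
    by_cases h : i = 0
    · subst h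
      show (if (0 : Fin 4) = 0 then w ^ 2 * (bAct A z 0) else w ^ d * (bAct A z 0)) = z' 0
      rw [if_pos rfl]
      have : bAct A z 0 = z 0 := by simp [bAct]
      rw [this]
      exact hw2
    · show (if i = 0 then _ else w ^ d * (bAct A z i)) = z' i
      rw [if_neg h]
      have hb : bAct A z i
          = (A.map Complex.ofReal).mulVec (fun j => z j.succ) (i.pred h) := by
        simp [bAct, h]
      rw [hb]
      have := congrFun husmul (i.pred h)
      have h2 : w ^ d * (A.map Complex.ofReal).mulVec (fun j => z j.succ) (i.pred h)
          = (A.map Complex.ofReal).mulVec u (i.pred h) := by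
        rw [this]; rfl
      rw [h2, hAc (i.pred h), Fin.succ_pred]
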